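/- (Covering by good cubes.) Let μ be a Radon measure on ℝ^N, ε > 0 and r_0 > 0. Then for every open set U ⊆ ℝ^N there is a sequence of pairwise disjoint closed cubes {Bx(z_λ, r_λ)}_λ contained in U such that: r_λ ≤ r_0 for all λ; μ(Fr(z_λ, r_λ, ε)) ≤ 16N·2^N·ε·μ(Bx(z_λ, r_λ)) for all λ; and μ(U \ ⋃_λ Bx(z_λ, r_λ)) = 0. -/

import Mathlib

open MeasureTheory

/-- The closed cube of center `x` and half-side `r`. -/
def Bx {N : ℕ} (x : Fin N → ℝ) (r : ℝ) : Set (Fin N → ℝ) :=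
  {y | ∀ i, |x i - y i| ≤ r}

/-- The `ε`-frame of the cube `Bx x r`. -/
def Fr {N : ℕ} (x : Fin N → ℝ) (r ε : ℝ) : Set (Fin N → ℝ) :=
  {y ∈ Bx x r | ∃ i, (1 - ε) * r ≤ |x i - y i|}

/-!
At `μ`-a.e. point `x`, the density of Lebesgue measure with respect to `μ` is finite, so `μ` of
the balls `B(x, r)` (cubes, in the sup norm) cannot decay faster than `r ^ N`: hence
`μ B(x, 2r) ≤ 2 ^ (N + 1) μ B(x, r)` for arbitrarily small `r`. For such `r`, the cubes of
half-sides `2r(1 - ε)^(2j)`, `j < ⌈1 / (8Nε)⌉`, contain `B(x, r)` and have pairwise disjoint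
`ε`-frames inside `B(x, 2r)`, so by pigeonhole one of the frames has measure at most
`16 N 2^N ε μ B(x, r)`. Besicovitch's covering theorem then picks disjoint such cubes covering `U`
up to a `μ`-null set.
-/

open Metric Set Filter Topology Module Function
open scoped ENNReal

theorem exists_measure_le_of_pairwiseDisjoint {α ι : Type*} [MeasurableSpace α] (μ : Measure α)
    {s : Finset ι} (hs : s.Nonempty) {t : ι → Set α} (ht : ∀ i ∈ s, MeasurableSet (t i))
    (hdisj : (s : Set ι).PairwiseDisjoint t) {T : Set α} (htT : ∀ i ∈ s, t i ⊆ T) {a : ℝ≥0∞}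
    (hT : μ T ≤ s.card * a) : ∃ i ∈ s, μ (t i) ≤ a := by
  refine ENNReal.exists_le_of_sum_le hs ?_
  calc ∑ i ∈ s, μ (t i) = μ (⋃ i ∈ s, t i) := (measure_biUnion_finset hdisj ht).symm
    _ ≤ μ T := measure_mono (iUnion₂_subset htT)
    _ ≤ ∑ _i ∈ s, a := by rwa [Finset.sum_const, nsmul_eq_mul]

section Doubling

variable {E : Type*} [NormedAddCommGroup E] [NormedSpace ℝ E] [FiniteDimensional ℝ E]
  [MeasurableSpace E] [BorelSpace E]

theorem addHaar_closedBall_two_mul (ν : Measure E) [ν.IsAddHaarMeasure] (x : E) (r : ℝ) :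
    ν (closedBall x (2 * r)) = 2 ^ finrank ℝ E * ν (closedBall x r) := by
  rw [ν.addHaar_closedBall_mul_of_pos x two_pos, ν.addHaar_closedBall_center x r,
    ENNReal.ofReal_pow zero_le_two, ENNReal.ofReal_ofNat]

theorem frequently_measure_closedBall_two_mul_le_of_eventually_addHaar_le {μ : Measure E}
    [IsFiniteMeasureOnCompacts μ] (ν : Measure E) [ν.IsAddHaarMeasure] {x : E} {A : ℝ≥0∞}
    (hA : A ≠ ∞) (hdens : ∀ᶠ r in 𝓝[>] 0, ν (closedBall x r) ≤ A * μ (closedBall x r)) :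
    ∃ᶠ r in 𝓝[>] 0,
      μ (closedBall x (2 * r)) ≤ 2 ^ (finrank ℝ E + 1) * μ (closedBall x r) := by
  set d := finrank ℝ E
  by_contra! hbad
  obtain ⟨ρ, hρ, hρ'⟩ := (nhdsGT_basis 0).eventually_iff.1 (hbad.and hdens)
  set r : ℕ → ℝ := fun k => ρ / 2 ^ (k + 1)
  have hr : ∀ k, r k ∈ Ioo 0 ρ := fun k =>
    ⟨by positivity, div_lt_self hρ (one_lt_pow₀ one_lt_two k.succ_ne_zero)⟩
  have hr_succ : ∀ k, 2 * r (k + 1) = r k := fun k => by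
    simp only [r]; field_simp; ring
  have hμ : ∀ k,
      (2:ℝ≥0∞) ^ ((d + 1) * k) * μ (closedBall x (r k)) ≤ μ (closedBall x (r 0)) := by
    intro k
    induction k with
    | zero => simp
    | succ k ih =>
      calc (2:ℝ≥0∞) ^ ((d + 1) * (k + 1)) * μ (closedBall x (r (k + 1)))
          = 2 ^ ((d + 1) * k) * (2 ^ (d + 1) * μ (closedBall x (r (k + 1)))) := by ring
        _ ≤ 2 ^ ((d + 1) * k) * μ (closedBall x (r k)) := by
          rw [← hr_succ k]; exact mul_le_mul_right ((hρ' (hr _)).1.le) _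
        _ ≤ μ (closedBall x (r 0)) := ih
  have hν : ∀ k, (2:ℝ≥0∞) ^ (d * k) * ν (closedBall x (r k)) = ν (closedBall x (r 0)) := by
    intro k
    induction k with
    | zero => simp
    | succ k ih =>
      rw [← ih, ← hr_succ k, addHaar_closedBall_two_mul]
      ring
  have hbound : ∀ k,
      (2:ℝ≥0∞) ^ k * ν (closedBall x (r 0)) ≤ A * μ (closedBall x (r 0)) := by
    intro k
    calc (2:ℝ≥0∞) ^ k * ν (closedBall x (r 0))
        = 2 ^ ((d + 1) * k) * ν (closedBall x (r k)) := by rw [← hν k]; ring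
      _ ≤ 2 ^ ((d + 1) * k) * (A * μ (closedBall x (r k))) :=
          mul_le_mul_right (hρ' (hr k)).2 _
      _ ≤ A * μ (closedBall x (r 0)) := by
          rw [mul_left_comm]; exact mul_le_mul_right (hμ k) _
  have hto := ENNReal.Tendsto.mul_const (b := ν (closedBall x (r 0)))
    (ENNReal.tendsto_pow_atTop_nhds_top_iff.2 ENNReal.one_lt_two)
    (Or.inr measure_closedBall_lt_top.ne)
  rw [ENNReal.top_mul (measure_closedBall_pos ν x (hr 0).1).ne'] at hto
  exact (ENNReal.mul_lt_top hA.lt_top measure_closedBall_lt_top).ne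
    (top_le_iff.1 (le_of_tendsto' hto hbound))

theorem ae_frequently_measure_closedBall_two_mul_le (μ : Measure E) [IsLocallyFiniteMeasure μ] :
    ∀ᵐ x ∂μ, ∃ᶠ r in 𝓝[>] 0,
      μ (closedBall x (2 * r)) ≤ 2 ^ (finrank ℝ E + 1) * μ (closedBall x r) := by
  set ν : Measure E := Measure.addHaar
  filter_upwards [Besicovitch.ae_tendsto_rnDeriv ν μ, ν.rnDeriv_lt_top μ] with x hlim hfin
  have hA : ν.rnDeriv μ x + 1 ≠ ∞ := ENNReal.add_ne_top.2 ⟨hfin.ne, ENNReal.one_ne_top⟩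
  refine frequently_measure_closedBall_two_mul_le_of_eventually_addHaar_le ν hA ?_
  filter_upwards [hlim.eventually (gt_mem_nhds (ENNReal.lt_add_right hfin.ne one_ne_zero))]
    with r hr
  exact (ENNReal.div_le_iff_le_mul (Or.inr hA) (Or.inl measure_closedBall_lt_top.ne)).1 hr.le

end Doubling

section Cubes

variable {N : ℕ}

theorem bx_eq_closedBall (x : Fin N → ℝ) {r : ℝ} (hr : 0 ≤ r) : Bx x r = closedBall x r := by
  ext y
  simp [Bx, closedBall_pi x hr, Real.dist_eq, abs_sub_comm]

theorem bx_subset_bx (x : Fin N → ℝ) {r s : ℝ} (h : r ≤ s) : Bx x r ⊆ Bx x s :=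
  fun _ hy i => (hy i).trans h

theorem fr_subset_bx (x : Fin N → ℝ) (r ε : ℝ) : Fr x r ε ⊆ Bx x r := fun _ h => h.1

theorem measurableSet_fr (x : Fin N → ℝ) (r ε : ℝ) : MeasurableSet (Fr x r ε) := by
  unfold Fr Bx
  measurability

theorem disjoint_fr_bx {x : Fin N → ℝ} {r s ε : ℝ} (h : s < (1 - ε) * r) :
    Disjoint (Fr x r ε) (Bx x s) := by
  refine disjoint_left.2 fun y ⟨_, i, hi⟩ hs => ?_
  linarith [hs i]

theorem pairwise_disjoint_fr_mul_pow (x : Fin N → ℝ) {ε c : ℝ} (hε : 0 < ε) (hε₁ : ε < 1)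
    (hc : 0 < c) : Pairwise (Disjoint on fun j : ℕ => Fr x (c * (1 - ε) ^ (2 * j)) ε) := by
  refine (pairwise_disjoint_on _).2 fun i j hij =>
    (disjoint_fr_bx ?_).mono_right (fr_subset_bx x _ ε)
  have hq : (1 - ε) ^ 2 < 1 - ε := by nlinarith
  calc c * (1 - ε) ^ (2 * j) ≤ c * (1 - ε) ^ (2 * (i + 1)) :=
        mul_le_mul_of_nonneg_left (pow_le_pow_of_le_one (by linarith) (by linarith) (by omega))
          hc.le
    _ = (1 - ε) ^ 2 * (c * (1 - ε) ^ (2 * i)) := by ring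
    _ < (1 - ε) * (c * (1 - ε) ^ (2 * i)) := by gcongr

theorem exists_mem_Icc_measure_fr_le (μ : Measure (Fin N → ℝ)) (hN : 0 < N) {ε : ℝ}
    (hε : 0 < ε) (hε₁ : ε < 1) {x : Fin N → ℝ} {r : ℝ} (hr : 0 < r)
    (hD : μ (closedBall x (2 * r)) ≤ 2 ^ (N + 1) * μ (closedBall x r)) :
    ∃ s ∈ Icc r (2 * r), μ (Fr x s ε) ≤ ENNReal.ofReal (16 * N * 2 ^ N * ε) * μ (Bx x s) := by
  set n := ⌈1 / (8 * N * ε)⌉₊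
  set u : ℕ → ℝ := fun j => 2 * r * (1 - ε) ^ (2 * j)
  have hn : 0 < n := Nat.ceil_pos.2 (by positivity)
  have hu_mem : ∀ j < n, u j ∈ Icc r (2 * r) := by
    intro j hj
    have hjε : j * (8 * N * ε) < 1 := (lt_div_iff₀ (by positivity)).1 (Nat.lt_ceil.1 hj)
    have hjN : j * ε ≤ j * (N * ε) :=
      mul_le_mul_of_nonneg_left (le_mul_of_one_le_left hε.le (by exact_mod_cast hN)) j.cast_nonneg
    have hbern : 1 - 2 * j * ε ≤ (1 - ε) ^ (2 * j) := by
      simpa [sub_eq_add_neg] using one_add_mul_le_pow (show (-2 : ℝ) ≤ -ε by linarith) (2 * j)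
    refine ⟨by nlinarith, mul_le_of_le_one_right (by positivity) ?_⟩
    exact pow_le_one₀ (by linarith) (by linarith)
  have hcount : (2 : ℝ≥0∞) ^ (N + 1) ≤ n * ENNReal.ofReal (16 * N * 2 ^ N * ε) := by
    have hle : (2 : ℝ) ^ (N + 1) ≤ n * (16 * N * 2 ^ N * ε) := by
      have hn8 : 1 ≤ n * (8 * N * ε) := (div_le_iff₀ (by positivity)).1 (Nat.le_ceil _)
      calc (2 : ℝ) ^ (N + 1) = 2 * 2 ^ N * 1 := by ring
        _ ≤ 2 * 2 ^ N * (n * (8 * N * ε)) := by gcongr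
        _ = n * (16 * N * 2 ^ N * ε) := by ring
    rw [← ENNReal.ofReal_natCast, ← ENNReal.ofReal_mul (by positivity)]
    exact le_trans (by norm_num) (ENNReal.ofReal_le_ofReal hle)
  obtain ⟨j, hj, hle⟩ := exists_measure_le_of_pairwiseDisjoint μ
    (Finset.nonempty_range_iff.2 hn.ne') (fun j _ => measurableSet_fr x (u j) ε)
    ((pairwise_disjoint_fr_mul_pow x hε hε₁ (by positivity)).set_pairwise _)
    (T := closedBall x (2 * r)) (a := ENNReal.ofReal (16 * N * 2 ^ N * ε) * μ (closedBall x r))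
    (fun j hj => by
      rw [← bx_eq_closedBall x (by positivity)]
      exact (fr_subset_bx x _ ε).trans (bx_subset_bx x (hu_mem j (Finset.mem_range.1 hj)).2))
    (by rw [Finset.card_range, ← mul_assoc]; exact hD.trans (mul_le_mul_left hcount _))
  have hj := hu_mem j (Finset.mem_range.1 hj)
  refine ⟨u j, hj, hle.trans (mul_le_mul_right (measure_mono ?_) _)⟩
  rw [← bx_eq_closedBall x hr.le]
  exact bx_subset_bx x hj.1

theorem frequently_measure_fr_le (μ : Measure (Fin N → ℝ)) {ε : ℝ} (hε : 0 < ε) {x : Fin N → ℝ}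
    (hx : ∃ᶠ r in 𝓝[>] 0, μ (closedBall x (2 * r)) ≤ 2 ^ (N + 1) * μ (closedBall x r)) :
    ∃ᶠ r in 𝓝[>] 0, μ (Fr x r ε) ≤ ENNReal.ofReal (16 * N * 2 ^ N * ε) * μ (Bx x r) := by
  rcases N.eq_zero_or_pos with rfl | hN
  · exact Frequently.of_forall fun r => by simp [Fr]
  rcases lt_or_ge ε 1 with hε₁ | hε₁
  · rw [(nhdsGT_basis 0).frequently_iff] at hx ⊢
    intro δ hδ
    obtain ⟨r, hr, hD⟩ := hx (δ / 2) (by positivity)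
    obtain ⟨s, hs, hgood⟩ := exists_mem_Icc_measure_fr_le μ hN hε hε₁ hr.1 hD
    exact ⟨s, ⟨hr.1.trans_le hs.1, by linarith [hs.2, hr.2]⟩, hgood⟩
  · refine Frequently.of_forall fun r =>
      (measure_mono (fr_subset_bx x r ε)).trans (le_mul_of_one_le_left' ?_)
    have hN1 : (1 : ℝ) ≤ N := by exact_mod_cast hN
    have h2N : (1 : ℝ) ≤ 2 ^ N := one_le_pow₀ one_le_two
    rw [ENNReal.one_le_ofReal]
    nlinarith [mul_le_mul (mul_le_mul hN1 h2N zero_le_one (by positivity)) hε₁ zero_le_one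
      (by positivity)]

end Cubes

theorem stmt_4 {N : ℕ} (μ : Measure (Fin N → ℝ)) [IsLocallyFiniteMeasure μ]
    (ε r₀ : ℝ) (hε : 0 < ε) (hr₀ : 0 < r₀)
    (U : Set (Fin N → ℝ)) (hU : IsOpen U) :
    ∃ J : Set ((Fin N → ℝ) × ℝ), J.Countable ∧
      (∀ p ∈ J, 0 < p.2 ∧ p.2 ≤ r₀ ∧ Bx p.1 p.2 ⊆ U ∧
        μ (Fr p.1 p.2 ε) ≤ ENNReal.ofReal (16 * N * 2 ^ N * ε) * μ (Bx p.1 p.2)) ∧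
      (J.Pairwise fun p q => Disjoint (Bx p.1 p.2) (Bx q.1 q.2)) ∧
      μ (U \ ⋃ p ∈ J, Bx p.1 p.2) = 0 := by
  set D := {x | ∃ᶠ r in 𝓝[>] 0, μ (closedBall x (2 * r)) ≤ 2 ^ (N + 1) * μ (closedBall x r)}
  have hD : μ Dᶜ = 0 := by
    have h := ae_frequently_measure_closedBall_two_mul_le μ
    rwa [finrank_fin_fun] at h
  set good : (Fin N → ℝ) → Set ℝ := fun x => {r |
    μ (Fr x r ε) ≤ ENNReal.ofReal (16 * N * 2 ^ N * ε) * μ (Bx x r) ∧ closedBall x r ⊆ U}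
  have hgood : ∀ x ∈ U ∩ D, ∀ δ > 0, (good x ∩ Ioo 0 δ).Nonempty := fun x hx δ hδ => by
    obtain ⟨r, hrδ, hr⟩ := (nhdsGT_basis 0).frequently_iff.1
      ((frequently_measure_fr_le μ hε hx.2).and_eventually
        (nhdsWithin_le_nhds (eventually_closedBall_subset (hU.mem_nhds hx.1)))) δ hδ
    exact ⟨r, hr, hrδ⟩
  obtain ⟨t, r, htc, -, hr, hnull, hdisj⟩ :=
    Besicovitch.exists_disjoint_closedBall_covering_ae μ good (U ∩ D) hgood (fun _ => r₀)
      fun _ _ => hr₀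
  have hBx : ∀ x ∈ t, Bx x (r x) = closedBall x (r x) := fun x hx =>
    bx_eq_closedBall x (hr x hx).2.1.le
  refine ⟨(fun x => (x, r x)) '' t, htc.image _, ?_, ?_, ?_⟩
  · rintro _ ⟨x, hx, rfl⟩
    obtain ⟨⟨hfr, hrU⟩, hpos, hr₀'⟩ := hr x hx
    exact ⟨hpos, hr₀'.le, hBx x hx ▸ hrU, hfr⟩
  · rw [InjOn.pairwise_image fun x _ y _ h => congrArg Prod.fst h]
    intro x hx y hy hxy
    simpa only [Function.onFun, hBx x hx, hBx y hy] using hdisj hx hy hxy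
  · rw [biUnion_image, iUnion₂_congr hBx]
    refine measure_mono_null (fun y ⟨hyU, hy⟩ => ?_) (measure_union_null hnull hD)
    by_cases hyD : y ∈ D
    exacts [Or.inl ⟨⟨hyU, hyD⟩, hy⟩, Or.inr hyD]
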